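/- arXiv:1604.00130 — 8 statements merged into one kernel-verified Lean document; each statement's English description precedes it below -/
import Mathlib

section
/- Let X be a G-space and f : X → X be continuous. If f is strongly G-mixing, then f is totally G-transitive, i.e. f^m is G-transitive for every m ≥ 1. -/
open Pointwise

/-- `f` is `G`-transitive: for every pair of nonempty open sets `U, V ⊆ X` there are
`g ∈ G` and `k ≥ 1` with `g • f^[k] '' U ∩ V ≠ ∅`. -/
def GTransitive {G X : Type*} [Group G] [MulAction G X] [TopologicalSpace X]
    (f : X → X) : Prop :=
  ∀ U V : Set X, IsOpen U → IsOpen V → U.Nonempty → V.Nonempty →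
    ∃ (g : G) (k : ℕ), 1 ≤ k ∧ (g • (f^[k] '' U) ∩ V).Nonempty

/-- `f` is strongly `G`-mixing: for every pair of nonempty open sets `U, V` there is
`N ∈ ℕ` such that for all `n ≥ N` there is `g ∈ G` with `g • f^[n] '' U ∩ V ≠ ∅`. -/
def StronglyGMixing {G X : Type*} [Group G] [MulAction G X] [TopologicalSpace X]
    (f : X → X) : Prop :=
  ∀ U V : Set X, IsOpen U → IsOpen V → U.Nonempty → V.Nonempty →
    ∃ N : ℕ, ∀ n ≥ N, ∃ g : G, (g • (f^[n] '' U) ∩ V).Nonempty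

namespace StronglyGMixing

variable {G X : Type*} [Group G] [MulAction G X] [TopologicalSpace X] {f : X → X}

theorem iterate (hmix : StronglyGMixing (G := G) f) {m : ℕ} (hm : 1 ≤ m) :
    StronglyGMixing (G := G) (f^[m]) := by
  intro U V hU hV hUne hVne
  obtain ⟨N, hN⟩ := hmix U V hU hV hUne hVne
  refine ⟨N, fun n hn => ?_⟩
  rw [← Function.iterate_mul]
  exact hN (m * n) (hn.trans (Nat.le_mul_of_pos_left n hm))

theorem gTransitive (hmix : StronglyGMixing (G := G) f) : GTransitive (G := G) f := by
  intro U V hU hV hUne hVne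
  obtain ⟨N, hN⟩ := hmix U V hU hV hUne hVne
  obtain ⟨g, hg⟩ := hN (N + 1) N.le_succ
  exact ⟨g, N + 1, N.succ_pos, hg⟩

end StronglyGMixing

theorem stronglyGMixing_totallyGTransitive_general {G X : Type*} [Group G]
    [TopologicalSpace X] [MulAction G X]
    (f : X → X) (hmix : StronglyGMixing (G := G) f) :
    ∀ m : ℕ, 1 ≤ m → GTransitive (G := G) (f^[m]) :=
  fun _ hm => (hmix.iterate hm).gTransitive

/-- Let `X` be a `G`-space and `f : X → X` be continuous. If `f` is strongly `G`-mixing,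
then `f` is totally `G`-transitive, i.e. `f^[m]` is `G`-transitive for every `m ≥ 1`. -/
theorem stronglyGMixing_totallyGTransitive {G X : Type*} [Group G] [TopologicalSpace G]
    [IsTopologicalGroup G] [TopologicalSpace X] [MulAction G X] [ContinuousSMul G X]
    (f : X → X) (hf : Continuous f) (hmix : StronglyGMixing (G := G) f) :
    ∀ m : ℕ, 1 ≤ m → GTransitive (G := G) (f^[m]) :=
  stronglyGMixing_totallyGTransitive_general f hmix
end

section
/- Let X be a G-space and f : X → X be pseudoequivariant. If f is weakly G-mixing, then for every n ∈ ℕ and every collection of nonempty open sets U_1, …, U_n, V_1, …, V_n ⊆ X there exist g_1, …, g_n ∈ G and k ≥ 1 such that g_i • f^k(U_i) ∩ V_i ≠ ∅ for every i = 1, …, n (i.e. the n-fold product f × ⋯ × f is (G × ⋯ × G)-transitive). -/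
/-!
Let `N(U, V)` be the set of times `k` at which some translate `g • f^k(U)` meets `V`.
Given two pairs `(U, V)` and `(E, F)`, weak mixing yields `g, h, k` with `g • f^k(U)` meeting
`E` and `h • f^k(V)` meeting `F`; shrinking to `U' = U ∩ f^{-k}(g⁻¹E)`,
`V' = V ∩ f^{-k}(h⁻¹F)` gives `N(U', V') ⊆ N(U, V) ∩ N(E, F)`, because pseudoequivariance
lets `f^k` and `f^m` commute up to the group. By induction finitely many pairs are served by one
pair `(U', V')`, and `N(U', V')` contains some `k ≥ 1` by weak mixing again.
-/

open Pointwise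

/-- `f` is pseudoequivariant: `f(G • x) = G • f(x)` for every `x ∈ X`. -/
def Pseudoequivariant {G X : Type*} [Group G] [MulAction G X] (f : X → X) : Prop :=
  ∀ x : X, f '' (MulAction.orbit G x) = MulAction.orbit G (f x)

/-- `f` is weakly `G`-mixing: `f × f` is `(G × G)`-transitive, i.e. for all nonempty open
`U, V, E, F ⊆ X` there are `g, h ∈ G` and `k ≥ 1` with `g • f^[k] '' U ∩ E ≠ ∅` and
`h • f^[k] '' V ∩ F ≠ ∅`. -/
def WeaklyGMixing {G X : Type*} [Group G] [MulAction G X] [TopologicalSpace X]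
    (f : X → X) : Prop :=
  ∀ U V E F : Set X, IsOpen U → IsOpen V → IsOpen E → IsOpen F →
    U.Nonempty → V.Nonempty → E.Nonempty → F.Nonempty →
    ∃ (g h : G) (k : ℕ), 1 ≤ k ∧
      (g • (f^[k] '' U) ∩ E).Nonempty ∧ (h • (f^[k] '' V) ∩ F).Nonempty

namespace Pseudoequivariant

variable {G X : Type*} [Group G] [MulAction G X] {f f' : X → X}

theorem comp (hf : Pseudoequivariant (G := G) f) (hf' : Pseudoequivariant (G := G) f') :
    Pseudoequivariant (G := G) (f ∘ f') := fun x => by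
  rw [Set.image_comp, hf', Function.comp_apply, hf]

theorem iterate (hf : Pseudoequivariant (G := G) f) (n : ℕ) :
    Pseudoequivariant (G := G) f^[n] := by
  induction n with
  | zero => intro x; simp
  | succ n ih => rw [Function.iterate_succ']; exact hf.comp ih

theorem exists_smul_eq (hf : Pseudoequivariant (G := G) f) (g : G) (x : X) :
    ∃ a : G, a • f x = f (g • x) := by
  rw [← MulAction.mem_orbit_iff, ← hf]
  exact Set.mem_image_of_mem f (MulAction.mem_orbit x g)

end Pseudoequivariant

section hittingTimes

variable (G : Type*) {X : Type*} [Group G] [MulAction G X]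

def hittingTimes (f : X → X) (U V : Set X) : Set ℕ :=
  {k | ∃ g : G, (g • (f^[k] '' U) ∩ V).Nonempty}

variable {G}

theorem smul_image_inter_nonempty_iff {φ : X → X} {g : G} {U E : Set X} :
    (g • (φ '' U) ∩ E).Nonempty ↔ ∃ x ∈ U, g • φ x ∈ E := by
  simp only [← Set.image_smul, Set.image_image, Set.inter_nonempty_iff_exists_left,
    Set.exists_mem_image]

theorem mem_hittingTimes_iff {f : X → X} {U V : Set X} {k : ℕ} :
    k ∈ hittingTimes G f U V ↔ ∃ g : G, ∃ x ∈ U, g • f^[k] x ∈ V :=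
  exists_congr fun _ => smul_image_inter_nonempty_iff

theorem hittingTimes_mono {f : X → X} {U U' V V' : Set X} (hU : U' ⊆ U) (hV : V' ⊆ V) :
    hittingTimes G f U' V' ⊆ hittingTimes G f U V := by
  intro k hk
  obtain ⟨g, x, hx, hgx⟩ := mem_hittingTimes_iff.mp hk
  exact mem_hittingTimes_iff.mpr ⟨g, x, hU hx, hV hgx⟩

theorem hittingTimes_inter_preimage_subset {f : X → X} (hf : Pseudoequivariant (G := G) f)
    (U V E F : Set X) (k : ℕ) (g h : G) :
    hittingTimes G f (U ∩ f^[k] ⁻¹' (g⁻¹ • E)) (V ∩ f^[k] ⁻¹' (h⁻¹ • F)) ⊆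
      hittingTimes G f E F := by
  intro m hm
  obtain ⟨c, x, ⟨-, hxE⟩, -, hcxF⟩ := mem_hittingTimes_iff.mp hm
  rw [Set.mem_preimage, Set.mem_inv_smul_set_iff] at hxE hcxF
  -- `f^[k]` and `f^[m]` commute and map orbits onto orbits, so `f^[m] (g • f^[k] x)` and
  -- `f^[k] (c • f^[m] x)` lie in the same orbit.
  obtain ⟨a, ha⟩ := (hf.iterate k).exists_smul_eq c (f^[m] x)
  obtain ⟨b, hb⟩ := (hf.iterate m).exists_smul_eq g (f^[k] x)
  refine mem_hittingTimes_iff.mpr ⟨h * a * b⁻¹, g • f^[k] x, hxE, ?_⟩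
  rwa [mul_smul, ← hb, inv_smul_smul, mul_smul, ← Function.iterate_add_apply,
    Nat.add_comm, Function.iterate_add_apply, ha]

theorem exists_hittingTimes_subset_inter [TopologicalSpace X] [ContinuousConstSMul G X]
    {f : X → X} (hf : Continuous f) (hpe : Pseudoequivariant (G := G) f)
    (hwm : WeaklyGMixing (G := G) f) {U V E F : Set X} (hU : IsOpen U) (hV : IsOpen V)
    (hE : IsOpen E) (hF : IsOpen F) (hU₀ : U.Nonempty) (hV₀ : V.Nonempty)
    (hE₀ : E.Nonempty) (hF₀ : F.Nonempty) :
    ∃ U' V' : Set X, IsOpen U' ∧ IsOpen V' ∧ U'.Nonempty ∧ V'.Nonempty ∧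
      hittingTimes G f U' V' ⊆ hittingTimes G f U V ∩ hittingTimes G f E F := by
  obtain ⟨g, h, k, -, hUE, hVF⟩ := hwm U V E F hU hV hE hF hU₀ hV₀ hE₀ hF₀
  refine ⟨U ∩ f^[k] ⁻¹' (g⁻¹ • E), V ∩ f^[k] ⁻¹' (h⁻¹ • F),
    hU.inter ((hE.smul _).preimage (hf.iterate k)),
    hV.inter ((hF.smul _).preimage (hf.iterate k)),
    ?_, ?_, fun m hm => ⟨hittingTimes_mono Set.inter_subset_left Set.inter_subset_left hm,
      hittingTimes_inter_preimage_subset hpe U V E F k g h hm⟩⟩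
  · obtain ⟨x, hx, hgx⟩ := smul_image_inter_nonempty_iff.mp hUE
    exact ⟨x, hx, Set.mem_inv_smul_set_iff.mpr hgx⟩
  · obtain ⟨x, hx, hhx⟩ := smul_image_inter_nonempty_iff.mp hVF
    exact ⟨x, hx, Set.mem_inv_smul_set_iff.mpr hhx⟩

theorem exists_hittingTimes_subset_biInter [TopologicalSpace X] [ContinuousConstSMul G X]
    {f : X → X} (hf : Continuous f) (hpe : Pseudoequivariant (G := G) f)
    (hwm : WeaklyGMixing (G := G) f) {ι : Type*} {U V : ι → Set X}
    (hU : ∀ i, IsOpen (U i)) (hV : ∀ i, IsOpen (V i))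
    (hU₀ : ∀ i, (U i).Nonempty) (hV₀ : ∀ i, (V i).Nonempty) {s : Finset ι}
    (hs : s.Nonempty) :
    ∃ U' V' : Set X, IsOpen U' ∧ IsOpen V' ∧ U'.Nonempty ∧ V'.Nonempty ∧
      hittingTimes G f U' V' ⊆ ⋂ i ∈ s, hittingTimes G f (U i) (V i) := by
  induction hs using Finset.Nonempty.cons_induction with
  | singleton i => exact ⟨U i, V i, hU i, hV i, hU₀ i, hV₀ i, by simp⟩
  | cons i s _ _ ih =>
    obtain ⟨U', V', hU', hV', hU'₀, hV'₀, hsub⟩ := ih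
    obtain ⟨U'', V'', hU'', hV'', hU''₀, hV''₀, hsub'⟩ :=
      exists_hittingTimes_subset_inter hf hpe hwm (hU i) (hV i) hU' hV' (hU₀ i) (hV₀ i)
        hU'₀ hV'₀
    refine ⟨U'', V'', hU'', hV'', hU''₀, hV''₀,
      fun m hm => Set.mem_iInter₂.mpr fun j hj => ?_⟩
    obtain ⟨hmi, hms⟩ := hsub' hm
    rcases Finset.mem_cons.mp hj with rfl | hj
    · exact hmi
    · exact Set.mem_iInter₂.mp (hsub hms) j hj

end hittingTimes

theorem weaklyGMixing_nfold_transitive_general {G X : Type*} [Group G] [TopologicalSpace G]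
    [TopologicalSpace X] [MulAction G X] [ContinuousSMul G X]
    (f : X → X) (hf : Continuous f) (hpe : Pseudoequivariant (G := G) f)
    (hwm : WeaklyGMixing (G := G) f) :
    ∀ (n : ℕ) (U V : Fin n → Set X),
      (∀ i, IsOpen (U i)) → (∀ i, IsOpen (V i)) →
      (∀ i, (U i).Nonempty) → (∀ i, (V i).Nonempty) →
      ∃ (g : Fin n → G) (k : ℕ), 1 ≤ k ∧
        ∀ i, (g i • (f^[k] '' U i) ∩ V i).Nonempty := by
  intro n U V hU hV hU₀ hV₀
  rcases n with _ | n
  · exact ⟨finZeroElim, 1, le_rfl, finZeroElim⟩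
  obtain ⟨U', V', hU', hV', hU'₀, hV'₀, hsub⟩ :=
    exists_hittingTimes_subset_biInter hf hpe hwm hU hV hU₀ hV₀ Finset.univ_nonempty
  obtain ⟨g, -, k, hk, hgk, -⟩ := hwm U' U' V' V' hU' hU' hV' hV' hU'₀ hU'₀ hV'₀ hV'₀
  have hk_mem (i : Fin (n + 1)) : k ∈ hittingTimes G f (U i) (V i) :=
    Set.mem_iInter₂.mp (hsub ⟨g, hgk⟩) i (Finset.mem_univ i)
  choose g hg using hk_mem
  exact ⟨g, k, hk, hg⟩

/-- Let `X` be a `G`-space and `f : X → X` be pseudoequivariant. If `f` is weakly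
`G`-mixing, then for every `n` and all nonempty open sets `U 1, …, U n, V 1, …, V n`
there are `g 1, …, g n ∈ G` and `k ≥ 1` with `g i • f^[k] '' (U i) ∩ V i ≠ ∅` for all
`i`, i.e. the `n`-fold product `f × ⋯ × f` is `(G × ⋯ × G)`-transitive. -/
theorem weaklyGMixing_nfold_transitive {G X : Type*} [Group G] [TopologicalSpace G]
    [IsTopologicalGroup G] [TopologicalSpace X] [MulAction G X] [ContinuousSMul G X]
    (f : X → X) (hf : Continuous f) (hpe : Pseudoequivariant (G := G) f)
    (hwm : WeaklyGMixing (G := G) f) :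
    ∀ (n : ℕ) (U V : Fin n → Set X),
      (∀ i, IsOpen (U i)) → (∀ i, IsOpen (V i)) →
      (∀ i, (U i).Nonempty) → (∀ i, (V i).Nonempty) →
      ∃ (g : Fin n → G) (k : ℕ), 1 ≤ k ∧
        ∀ i, (g i • (f^[k] '' U i) ∩ V i).Nonempty :=
  weaklyGMixing_nfold_transitive_general f hf hpe hwm
end

section
/- Let X be a G-space and f : X → X be pseudoequivariant. If f is weakly G-mixing, then f is totally G-transitive, i.e. f^m is G-transitive for every m ≥ 1. -/
open Pointwise

/-! `f` maps `G`-orbits into `G`-orbits, so it descends to a continuous map `F` of the orbit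
space `X ⧸ G`, and since the quotient map is open, `G`-transitivity and weak `G`-mixing of `f`
are plain topological transitivity and weak mixing of `F`. For `F` we run Furstenberg's argument:
if `k` returns `A` to `C` and `B` to `D`, then every return time of `A ∩ F⁻ᵏ C` to `B ∩ F⁻ᵏ D`
returns both `A` to `B` and `C` to `D`. Hence some `l` returns `U` to each of `F⁻ⁱ V`,
`1 ≤ i ≤ m`, and one of `l + 1, …, l + m` is a positive multiple of `m`. -/

open Function Set

section Dynamics

variable {Y : Type*} {F : Y → Y}

def returnTimes (F : Y → Y) (U V : Set Y) : Set ℕ :=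
  {k | (U ∩ F^[k] ⁻¹' V).Nonempty}

theorem add_mem_returnTimes_iff {U V : Set Y} {k i : ℕ} :
    k ∈ returnTimes F U (F^[i] ⁻¹' V) ↔ i + k ∈ returnTimes F U V := by
  simp only [returnTimes, mem_ofPred_eq, ← preimage_comp, ← iterate_add]

theorem mem_returnTimes_iterate_iff {U V : Set Y} {m j : ℕ} :
    j ∈ returnTimes F^[m] U V ↔ m * j ∈ returnTimes F U V := by
  rw [returnTimes, mem_ofPred_eq, ← iterate_mul]; rfl

variable [TopologicalSpace Y]

def IsTopologicallyTransitive (F : Y → Y) : Prop :=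
  ∀ ⦃U V : Set Y⦄, IsOpen U → IsOpen V → U.Nonempty → V.Nonempty →
    ∃ k, 1 ≤ k ∧ k ∈ returnTimes F U V

/-- Transitivity of `F × F`, tested on open boxes, which form a basis of `Y × Y`. -/
def IsWeaklyMixing (F : Y → Y) : Prop :=
  ∀ ⦃A B C D : Set Y⦄, IsOpen A → IsOpen B → IsOpen C → IsOpen D →
    A.Nonempty → B.Nonempty → C.Nonempty → D.Nonempty →
    ∃ k, 1 ≤ k ∧ k ∈ returnTimes F A C ∧ k ∈ returnTimes F B D

theorem IsWeaklyMixing.isTopologicallyTransitive (h : IsWeaklyMixing F) :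
    IsTopologicallyTransitive F := fun _ _ hU hV hU₀ hV₀ ↦
  let ⟨k, hk, hUV, _⟩ := h hU hU hV hV hU₀ hU₀ hV₀ hV₀
  ⟨k, hk, hUV⟩

theorem IsTopologicallyTransitive.nonempty_preimage_iterate (hF : Continuous F)
    (h : IsTopologicallyTransitive F) {V : Set Y} (hV : IsOpen V) (hV₀ : V.Nonempty) :
    ∀ i, (F^[i] ⁻¹' V).Nonempty
  | 0 => hV₀
  | i + 1 => by
    set W := F^[i] ⁻¹' V
    have hW : IsOpen W := hV.preimage (hF.iterate i)
    have hW₀ : W.Nonempty := h.nonempty_preimage_iterate hF hV hV₀ i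
    obtain ⟨k, hk, x, -, hx⟩ := h hW hW hW₀ hW₀
    obtain ⟨k, rfl⟩ := Nat.exists_eq_add_of_le' hk
    refine ⟨F^[k] x, ?_⟩
    rwa [iterate_succ, preimage_comp, mem_preimage, ← iterate_succ_apply' F k]

theorem IsWeaklyMixing.exists_returnTimes_subset_inter (hF : Continuous F) (h : IsWeaklyMixing F)
    {A B C D : Set Y} (hA : IsOpen A) (hB : IsOpen B) (hC : IsOpen C) (hD : IsOpen D)
    (hA₀ : A.Nonempty) (hB₀ : B.Nonempty) (hC₀ : C.Nonempty) (hD₀ : D.Nonempty) :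
    ∃ U V, IsOpen U ∧ IsOpen V ∧ U.Nonempty ∧ V.Nonempty ∧
      returnTimes F U V ⊆ returnTimes F A B ∩ returnTimes F C D := by
  obtain ⟨k, -, hAC, hBD⟩ := h hA hB hC hD hA₀ hB₀ hC₀ hD₀
  refine ⟨A ∩ F^[k] ⁻¹' C, B ∩ F^[k] ⁻¹' D, hA.inter (hC.preimage (hF.iterate k)),
    hB.inter (hD.preimage (hF.iterate k)), hAC, hBD, ?_⟩
  rintro l ⟨x, ⟨hxA, hxC⟩, hxB, hxD⟩
  refine ⟨⟨x, hxA, hxB⟩, F^[k] x, hxC, ?_⟩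
  rwa [mem_preimage, ← iterate_add_apply, add_comm, iterate_add_apply]

theorem IsWeaklyMixing.exists_returnTimes_subset_biInter (hF : Continuous F)
    (h : IsWeaklyMixing F) {A B : ℕ → Set Y} (hA : ∀ i, IsOpen (A i)) (hB : ∀ i, IsOpen (B i))
    (hA₀ : ∀ i, (A i).Nonempty) (hB₀ : ∀ i, (B i).Nonempty) :
    ∀ n, ∃ U V, IsOpen U ∧ IsOpen V ∧ U.Nonempty ∧ V.Nonempty ∧
      returnTimes F U V ⊆ ⋂ i < n, returnTimes F (A i) (B i)
  | 0 => ⟨A 0, B 0, hA 0, hB 0, hA₀ 0, hB₀ 0, by simp⟩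
  | n + 1 => by
    obtain ⟨U, V, hU, hV, hU₀, hV₀, hUV⟩ := h.exists_returnTimes_subset_biInter hF hA hB hA₀ hB₀ n
    obtain ⟨U', V', hU', hV', hU'₀, hV'₀, hU'V'⟩ :=
      h.exists_returnTimes_subset_inter hF (hA n) (hB n) hU hV (hA₀ n) (hB₀ n) hU₀ hV₀
    refine ⟨U', V', hU', hV', hU'₀, hV'₀, fun l hl ↦ ?_⟩
    simp only [mem_iInter, Nat.lt_succ_iff_lt_or_eq]
    rintro i (hi | rfl)
    · exact mem_iInter₂.1 (hUV (hU'V' hl).2) i hi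
    · exact (hU'V' hl).1

theorem IsWeaklyMixing.isTopologicallyTransitive_iterate (hF : Continuous F)
    (h : IsWeaklyMixing F) {m : ℕ} (hm : 1 ≤ m) : IsTopologicallyTransitive F^[m] := by
  intro U V hU hV hU₀ hV₀
  have hpre := h.isTopologicallyTransitive.nonempty_preimage_iterate hF hV hV₀
  obtain ⟨U', V', hU', hV', hU'₀, hV'₀, hU'V'⟩ := h.exists_returnTimes_subset_biInter hF
    (A := fun _ ↦ U) (B := fun i ↦ F^[i + 1] ⁻¹' V) (fun _ ↦ hU)
    (fun _ ↦ hV.preimage (hF.iterate _)) (fun _ ↦ hU₀) (fun _ ↦ hpre _) m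
  obtain ⟨l, -, hl⟩ := h.isTopologicallyTransitive hU' hV' hU'₀ hV'₀
  set j := l / m + 1
  have hlj : l < m * j := Nat.lt_mul_div_succ l hm
  have hjl : m * j ≤ l + m := by have := Nat.mul_div_le l m; rw [mul_add, mul_one]; omega
  refine ⟨j, Nat.le_add_left 1 _, mem_returnTimes_iterate_iff.2 ?_⟩
  have := add_mem_returnTimes_iff.1 (mem_iInter₂.1 (hU'V' hl) (m * j - l - 1) (by omega))
  rwa [show m * j - l - 1 + 1 + l = m * j by omega] at this

end Dynamics

section OrbitSpace

variable {G X : Type*} [Group G] [MulAction G X]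

theorem exists_smul_inter_nonempty_iff_image_quotient {S V : Set X} :
    (∃ g : G, (g • S ∩ V).Nonempty) ↔
      (Quotient.mk (MulAction.orbitRel G X) '' S ∩ Quotient.mk _ '' V).Nonempty := by
  constructor
  · rintro ⟨g, _, ⟨s, hs, rfl⟩, hv⟩
    exact ⟨_, mem_image_of_mem _ hs, g • s, hv, Quotient.sound ⟨g, rfl⟩⟩
  · rintro ⟨_, ⟨s, hs, rfl⟩, v, hv, hvs⟩
    obtain ⟨g, rfl⟩ : v ∈ MulAction.orbit G s := Quotient.exact hvs
    exact ⟨g, g • s, smul_mem_smul_set hs, hv⟩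

variable {φ : X → X} {Φ : Quotient (MulAction.orbitRel G X) → Quotient (MulAction.orbitRel G X)}

theorem Function.Semiconj.exists_smul_image_iterate_inter_nonempty_iff
    (h : Semiconj (Quotient.mk _) φ Φ) {U V : Set X} {k : ℕ} :
    (∃ g : G, (g • (φ^[k] '' U) ∩ V).Nonempty) ↔
      k ∈ returnTimes Φ (Quotient.mk _ '' U) (Quotient.mk _ '' V) := by
  rw [exists_smul_inter_nonempty_iff_image_quotient, ← image_comp, (h.iterate_right k).comp_eq,
    image_comp, image_inter_nonempty_iff]
  rfl

variable [TopologicalSpace X]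

theorem WeaklyGMixing.isWeaklyMixing (h : Semiconj (Quotient.mk _) φ Φ)
    (hφ : WeaklyGMixing (G := G) φ) : IsWeaklyMixing Φ := by
  intro A B C D hA hB hC hD hA₀ hB₀ hC₀ hD₀
  have hsurj : Surjective (Quotient.mk (MulAction.orbitRel G X)) := Quotient.mk_surjective
  obtain ⟨g, g', k, hk, hAC, hBD⟩ := hφ _ _ _ _ (hA.preimage continuous_quotient_mk')
    (hB.preimage continuous_quotient_mk') (hC.preimage continuous_quotient_mk')
    (hD.preimage continuous_quotient_mk') (hA₀.preimage hsurj) (hB₀.preimage hsurj)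
    (hC₀.preimage hsurj) (hD₀.preimage hsurj)
  rw [← image_preimage_eq A hsurj, ← image_preimage_eq B hsurj, ← image_preimage_eq C hsurj,
    ← image_preimage_eq D hsurj]
  exact ⟨k, hk, h.exists_smul_image_iterate_inter_nonempty_iff.1 ⟨g, hAC⟩,
    h.exists_smul_image_iterate_inter_nonempty_iff.1 ⟨g', hBD⟩⟩

theorem IsTopologicallyTransitive.gTransitive [ContinuousConstSMul G X]
    (h : Semiconj (Quotient.mk _) φ Φ) (hΦ : IsTopologicallyTransitive Φ) :
    GTransitive (G := G) φ := by
  intro U V hU hV hU₀ hV₀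
  have hπ := (MulAction.isOpenQuotientMap_quotientMk (Γ := G) (T := X)).isOpenMap
  obtain ⟨k, hk, hUV⟩ := hΦ (hπ U hU) (hπ V hV) (hU₀.image _) (hV₀.image _)
  obtain ⟨g, hg⟩ := h.exists_smul_image_iterate_inter_nonempty_iff.2 hUV
  exact ⟨g, k, hk, hg⟩

end OrbitSpace

namespace Pseudoequivariant

variable {G X : Type*} [Group G] [MulAction G X] {f : X → X}

theorem smul_mem_orbit (hf : Pseudoequivariant (G := G) f) (g : G) (x : X) :
    f (g • x) ∈ MulAction.orbit G (f x) :=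
  hf x ▸ mem_image_of_mem f (MulAction.mem_orbit x g)

def orbitMap (hf : Pseudoequivariant (G := G) f) :
    Quotient (MulAction.orbitRel G X) → Quotient (MulAction.orbitRel G X) :=
  Quotient.map' f fun _ _ ⟨g, hg⟩ ↦ hg ▸ hf.smul_mem_orbit g _

theorem semiconj_orbitMap (hf : Pseudoequivariant (G := G) f) :
    Semiconj (Quotient.mk _) f hf.orbitMap := fun _ ↦ rfl

theorem continuous_orbitMap [TopologicalSpace X] (hf : Pseudoequivariant (G := G) f)
    (hc : Continuous f) : Continuous hf.orbitMap :=
  hc.quotient_map' _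

end Pseudoequivariant

theorem weaklyGMixing_totallyGTransitive_general {G X : Type*} [Group G] [TopologicalSpace G]
    [TopologicalSpace X] [MulAction G X] [ContinuousSMul G X]
    (f : X → X) (hf : Continuous f) (hpe : Pseudoequivariant (G := G) f)
    (hwm : WeaklyGMixing (G := G) f) :
    ∀ m : ℕ, 1 ≤ m → GTransitive (G := G) (f^[m]) := by
  intro m hm
  have hΦ := hpe.semiconj_orbitMap
  have hmix := hwm.isWeaklyMixing hΦ
  exact (hmix.isTopologicallyTransitive_iterate (hpe.continuous_orbitMap hf) hm).gTransitive
    (hΦ.iterate_right m)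

/-- Let `X` be a `G`-space and `f : X → X` be pseudoequivariant. If `f` is weakly
`G`-mixing, then `f` is totally `G`-transitive, i.e. `f^[m]` is `G`-transitive for
every `m ≥ 1`. -/
theorem weaklyGMixing_totallyGTransitive {G X : Type*} [Group G] [TopologicalSpace G]
    [IsTopologicalGroup G] [TopologicalSpace X] [MulAction G X] [ContinuousSMul G X]
    (f : X → X) (hf : Continuous f) (hpe : Pseudoequivariant (G := G) f)
    (hwm : WeaklyGMixing (G := G) f) :
    ∀ m : ℕ, 1 ≤ m → GTransitive (G := G) (f^[m]) :=
  weaklyGMixing_totallyGTransitive_general f hf hpe hwm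
end

section
/- Let X be a Hausdorff G-space, where G is a compact topological group, and let f : X → X be pseudoequivariant and G-minimal. Then either X has no isolated points, or X is a single G_f-orbit, i.e. X = G_f(x) for some x ∈ X. -/
open Pointwise

/-- The `G_f`-orbit of `x`: the set `{g • f^[k] x : g ∈ G, k ≥ 0}`. -/
def GfOrbit {G X : Type*} [Group G] [MulAction G X] (f : X → X) (x : X) : Set X :=
  {y | ∃ (g : G) (k : ℕ), g • f^[k] x = y}

/-- `f` is `G`-minimal if every `G_f`-orbit is dense in `X`. -/
def GMinimal {G X : Type*} [Group G] [MulAction G X] [TopologicalSpace X]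
    (f : X → X) : Prop :=
  ∀ x : X, closure (GfOrbit (G := G) f x) = Set.univ

/-!
Pseudoequivariance says exactly that `f` maps `G`-orbits onto `G`-orbits, so the orbits of the
iterates `f^[k] x` are the iterates of the orbit of `x` under `Set.image f`, and `G_f(x)` is their
union. If `{x}` is open, then so is the orbit of `x`; density of `G_f(f x)` makes some `f^[n] x`,
`n > 0`, return to it, the orbit of `x` is then periodic under `Set.image f`, and `G_f(x)` is a
finite union of orbits. Orbits of a compact group are compact, hence closed, so `G_f(x)` is closed
and dense, i.e. everything.
-/

open MulAction

section Orbits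

variable {G X : Type*} [Group G] [MulAction G X]

theorem gfOrbit_eq_iUnion_orbit (f : X → X) (x : X) :
    GfOrbit (G := G) f x = ⋃ k, orbit G (f^[k] x) := by
  ext y
  simp only [GfOrbit, Set.mem_ofPred_eq, Set.mem_iUnion, mem_orbit_iff]
  exact exists_comm

theorem Pseudoequivariant.orbit_iterate {f : X → X} (hpe : Pseudoequivariant (G := G) f)
    (k : ℕ) (x : X) : orbit G (f^[k] x) = (Set.image f)^[k] (orbit G x) := by
  induction k with
  | zero => rfl
  | succ k ih =>
    rw [Function.iterate_succ_apply', Function.iterate_succ_apply', ← ih, hpe]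

theorem Pseudoequivariant.gfOrbit_eq_biUnion_orbit {f : X → X}
    (hpe : Pseudoequivariant (G := G) f) {x : X} {n : ℕ} (hn : 0 < n)
    (hper : orbit G (f^[n] x) = orbit G x) :
    GfOrbit (G := G) f x = ⋃ k ∈ Finset.range n, orbit G (f^[k] x) := by
  have hperiodic : Function.IsPeriodicPt (Set.image f) n (orbit G x) := by
    rw [Function.IsPeriodicPt, Function.IsFixedPt, ← hpe.orbit_iterate, hper]
  refine (gfOrbit_eq_iUnion_orbit f x).trans (subset_antisymm (Set.iUnion_subset fun k => ?_)
    (Set.iUnion₂_subset fun k _ => Set.subset_iUnion (fun k => orbit G (f^[k] x)) k))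
  rw [hpe.orbit_iterate, ← hperiodic.iterate_mod_apply, ← hpe.orbit_iterate]
  exact Set.subset_iUnion₂ (s := fun k _ => orbit G (f^[k] x)) (k % n)
    (Finset.mem_range.2 (Nat.mod_lt k hn))

end Orbits

section Topology

variable {G X : Type*} [Group G] [MulAction G X] [TopologicalSpace X]

theorem isOpen_orbit_of_isOpen_singleton [ContinuousConstSMul G X] {x : X}
    (hx : IsOpen ({x} : Set X)) : IsOpen (orbit G x) := by
  have horbit : orbit G x = ⋃ g : G, g • ({x} : Set X) := by
    ext y
    simp [mem_orbit_iff]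
  rw [horbit]
  exact isOpen_iUnion fun g => hx.smul g

theorem isClosed_orbit [TopologicalSpace G] [CompactSpace G] [T2Space X] [ContinuousSMul G X]
    (x : X) : IsClosed (orbit G x) :=
  (isCompact_range (continuous_id.smul continuous_const)).isClosed

theorem exists_pos_orbit_iterate_eq_of_dense {f : X → X} {x : X} (hx : IsOpen (orbit G x))
    (hdense : Dense (GfOrbit (G := G) f (f x))) :
    ∃ n, 0 < n ∧ orbit G (f^[n] x) = orbit G x := by
  obtain ⟨y, hyx, g, k, rfl⟩ := hdense.inter_open_nonempty _ hx ⟨x, mem_orbit_self x⟩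
  refine ⟨k + 1, k.succ_pos, ?_⟩
  rw [Function.iterate_succ_apply, ← orbit_smul g, orbit_eq_iff]
  exact hyx

end Topology

theorem gMinimal_no_isolated_or_single_orbit_general {G X : Type*} [Group G] [TopologicalSpace G]
    [CompactSpace G] [TopologicalSpace X] [T2Space X]
    [MulAction G X] [ContinuousSMul G X]
    (f : X → X) (hpe : Pseudoequivariant (G := G) f)
    (hmin : GMinimal (G := G) f) :
    (∀ x : X, ¬ IsOpen ({x} : Set X)) ∨ (∃ x : X, GfOrbit (G := G) f x = Set.univ) := by
  rw [or_iff_not_imp_left, not_forall_not]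
  rintro ⟨x, hx⟩
  obtain ⟨n, hn, hper⟩ := exists_pos_orbit_iterate_eq_of_dense
    (isOpen_orbit_of_isOpen_singleton hx) (dense_iff_closure_eq.2 (hmin (f x)))
  have hclosed : IsClosed (GfOrbit (G := G) f x) := by
    rw [hpe.gfOrbit_eq_biUnion_orbit hn hper]
    exact (Finset.range n).finite_toSet.isClosed_biUnion fun k _ => isClosed_orbit _
  exact ⟨x, by rw [← hclosed.closure_eq, hmin x]⟩

/-- Let `X` be a Hausdorff `G`-space, where `G` is a compact topological group, and let
`f : X → X` be pseudoequivariant and `G`-minimal. Then either `X` has no isolated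
points, or `X` is a single `G_f`-orbit. -/
theorem gMinimal_no_isolated_or_single_orbit {G X : Type*} [Group G] [TopologicalSpace G]
    [IsTopologicalGroup G] [CompactSpace G] [TopologicalSpace X] [T2Space X]
    [MulAction G X] [ContinuousSMul G X]
    (f : X → X) (hf : Continuous f) (hpe : Pseudoequivariant (G := G) f)
    (hmin : GMinimal (G := G) f) :
    (∀ x : X, ¬ IsOpen ({x} : Set X)) ∨ (∃ x : X, GfOrbit (G := G) f x = Set.univ) :=
  gMinimal_no_isolated_or_single_orbit_general f hpe hmin
end

section
/- Let X be a G-space and f : X → X be pseudoequivariant and G-transitive. If M ⊆ X is a G-minimal set of f, then either M = X or M is nowhere dense in X. -/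
/-!
A set invariant under `f` and under `G` that has an interior point is dense: `G`-transitivity
carries its interior into every nonempty open set. A closed such set is therefore everything,
while a closed set with empty interior is nowhere dense.
-/

open Pointwise

/-- `M` is a `G`-minimal set of `f`: `M` is nonempty, closed, `+f` invariant,
`G`-invariant, and the closure of `G_f(y)` equals `M` for every `y ∈ M`. -/
def IsGMinimalSet {G X : Type*} [Group G] [MulAction G X] [TopologicalSpace X]
    (f : X → X) (M : Set X) : Prop :=
  M.Nonempty ∧ IsClosed M ∧ f '' M ⊆ M ∧ (∀ g : G, g • M ⊆ M) ∧
    ∀ y ∈ M, closure (GfOrbit (G := G) f y) = M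

theorem GTransitive.dense_of_invariant {G X : Type*} [Group G] [MulAction G X]
    [TopologicalSpace X] {f : X → X} (htr : GTransitive (G := G) f) {S : Set X}
    (hfS : Set.MapsTo f S S) (hgS : ∀ g : G, g • S ⊆ S) (hS : (interior S).Nonempty) :
    Dense S := by
  refine dense_iff_inter_open.2 fun V hV hVne => ?_
  obtain ⟨g, k, -, y, hyS, hyV⟩ := htr (interior S) V isOpen_interior hV hS hVne
  have hkS : f^[k] '' interior S ⊆ S :=
    ((hfS.iterate k).mono_left interior_subset).image_subset
  exact ⟨y, hyV, hgS g (Set.smul_set_mono hkS hyS)⟩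

theorem gMinimalSet_eq_or_nowhereDense_general {G X : Type*} [Group G]
    [TopologicalSpace X] [MulAction G X]
    (f : X → X)
    (htr : GTransitive (G := G) f)
    (M : Set X) (hM : IsGMinimalSet (G := G) f M) :
    M = Set.univ ∨ IsNowhereDense M := by
  obtain ⟨-, hMcl, hfM, hgM, -⟩ := hM
  by_cases hint : (interior M).Nonempty
  · left
    have hdense := htr.dense_of_invariant (Set.mapsTo_iff_image_subset.2 hfM) hgM hint
    rw [← hMcl.closure_eq, hdense.closure_eq]
  · right
    exact hMcl.isNowhereDense_iff.2 (Set.not_nonempty_iff_eq_empty.1 hint)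

/-- Let `X` be a `G`-space and `f : X → X` be pseudoequivariant and `G`-transitive.
If `M ⊆ X` is a `G`-minimal set of `f`, then either `M = X` or `M` is nowhere dense
in `X`. -/
theorem gMinimalSet_eq_or_nowhereDense {G X : Type*} [Group G] [TopologicalSpace G]
    [IsTopologicalGroup G] [TopologicalSpace X] [MulAction G X] [ContinuousSMul G X]
    (f : X → X) (hf : Continuous f) (hpe : Pseudoequivariant (G := G) f)
    (htr : GTransitive (G := G) f)
    (M : Set X) (hM : IsGMinimalSet (G := G) f M) :
    M = Set.univ ∨ IsNowhereDense M :=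
  gMinimalSet_eq_or_nowhereDense_general f htr M hM
end

section
/- Let X be a G-space and f : X → X be pseudoequivariant. Then f is G-minimal if and only if the induced map f̄ on the orbit space X/G, defined by f̄(G • x) = G • f(x), is minimal, i.e. the f̄-orbit of every point of X/G is dense in X/G. -/
open Pointwise

theorem gfOrbit_eq_preimage_fbarOrbit {G X : Type*} [Group G] [MulAction G X] {f : X → X}
    {fbar : Quotient (MulAction.orbitRel G X) → Quotient (MulAction.orbitRel G X)}
    (h : Function.Semiconj (Quotient.mk _) f fbar) (x : X) :
    GfOrbit (G := G) f x =
      Quotient.mk _ ⁻¹' {η | ∃ k : ℕ, fbar^[k] (Quotient.mk _ x) = η} := by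
  ext y
  simp only [GfOrbit, Set.mem_ofPred_eq, Set.mem_preimage, ← (h.iterate_right _).eq, eq_comm,
    Quotient.eq, MulAction.orbitRel_apply, MulAction.mem_orbit_iff]
  exact exists_comm

theorem gMinimal_iff_induced_minimal_general {G X : Type*} [Group G] [TopologicalSpace G]
    [TopologicalSpace X] [MulAction G X] [ContinuousSMul G X]
    (f : X → X)
    (fbar : Quotient (MulAction.orbitRel G X) → Quotient (MulAction.orbitRel G X))
    (hfbar : ∀ x : X, fbar (Quotient.mk (MulAction.orbitRel G X) x) =
      Quotient.mk (MulAction.orbitRel G X) (f x)) :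
    GMinimal (G := G) f ↔
      ∀ ξ : Quotient (MulAction.orbitRel G X),
        Dense {η | ∃ k : ℕ, fbar^[k] ξ = η} := by
  have hsemi : Function.Semiconj (Quotient.mk _) f fbar := fun x => (hfbar x).symm
  simp only [GMinimal, ← dense_iff_closure_eq, gfOrbit_eq_preimage_fbarOrbit hsemi,
    MulAction.isOpenQuotientMap_quotientMk.dense_preimage_iff, Quotient.forall]

/-- Let `X` be a `G`-space and `f : X → X` be pseudoequivariant, and let `fbar` be the
induced map on the orbit space `X/G` (the quotient of `X` by the orbit relation, with
the quotient topology), i.e. `fbar (G • x) = G • f(x)`. Then `f` is `G`-minimal iff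
`fbar` is minimal, i.e. every `fbar`-orbit is dense in `X/G`. -/
theorem gMinimal_iff_induced_minimal {G X : Type*} [Group G] [TopologicalSpace G]
    [IsTopologicalGroup G] [TopologicalSpace X] [MulAction G X] [ContinuousSMul G X]
    (f : X → X) (hf : Continuous f) (hpe : Pseudoequivariant (G := G) f)
    (fbar : Quotient (MulAction.orbitRel G X) → Quotient (MulAction.orbitRel G X))
    (hfbar : ∀ x : X, fbar (Quotient.mk (MulAction.orbitRel G X) x) =
      Quotient.mk (MulAction.orbitRel G X) (f x)) :
    GMinimal (G := G) f ↔
      ∀ ξ : Quotient (MulAction.orbitRel G X),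
        Dense {η | ∃ k : ℕ, fbar^[k] ξ = η} :=
  gMinimal_iff_induced_minimal_general f fbar hfbar
end

section
/- Let X be a sequentially compact G-space and f : X → X be pseudoequivariant. Then f is G-minimal if and only if for every nonempty open set U ⊆ X there exists n ∈ ℕ such that ⋃_{g ∈ G} ⋃_{k=0}^{n} g • f^{-k}(U) = X. -/
open Pointwise

/-!
Pseudoequivariance lets one move the group action past iterates of `f`: the sets
`{g • f^k x : g ∈ G}` and `{f^k (g • x) : g ∈ G}` coincide. Hence the `G_f`-orbit of `x` meets `U`
exactly when `x` lies in some `g • f^{-k}(U)`, so `G`-minimality says that these open sets cover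
`X` for every nonempty open `U`. Their unions over `k ≤ n` form an increasing sequence of open
sets, and a sequentially compact space is countably compact, so one of them is already all of `X`.
-/

open Set

section

variable {G X : Type*} [Group G] [MulAction G X] {f : X → X}

theorem Pseudoequivariant.image_iterate_orbit (hpe : Pseudoequivariant (G := G) f) (k : ℕ)
    (x : X) : f^[k] '' MulAction.orbit G x = MulAction.orbit G (f^[k] x) := by
  induction k generalizing x with
  | zero => simp
  | succ k ih => rw [Function.iterate_succ', image_comp, ih, hpe, Function.comp_apply]

theorem Pseudoequivariant.exists_smul_iterate_eq_iff (hpe : Pseudoequivariant (G := G) f)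
    (k : ℕ) (x y : X) : (∃ g : G, g • f^[k] x = y) ↔ ∃ g : G, f^[k] (g • x) = y := by
  rw [← MulAction.mem_orbit_iff, ← hpe.image_iterate_orbit]
  simp only [mem_image, MulAction.mem_orbit_iff, exists_exists_eq_and]

theorem Pseudoequivariant.inter_gfOrbit_nonempty_iff (hpe : Pseudoequivariant (G := G) f)
    (U : Set X) (x : X) :
    (U ∩ GfOrbit (G := G) f x).Nonempty ↔ ∃ (g : G) (k : ℕ), f^[k] (g • x) ∈ U := by
  constructor
  · rintro ⟨y, hyU, g, k, rfl⟩
    obtain ⟨g', hg'⟩ := (hpe.exists_smul_iterate_eq_iff k x _).mp ⟨g, rfl⟩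
    exact ⟨g', k, hg' ▸ hyU⟩
  · rintro ⟨g, k, hk⟩
    obtain ⟨g', hg'⟩ := (hpe.exists_smul_iterate_eq_iff k x _).mpr ⟨g, rfl⟩
    exact ⟨_, hk, g', k, hg'⟩

theorem mem_iUnion_smul_preimage_iterate_iff (U : Set X) (n : ℕ) (x : X) :
    x ∈ ⋃ g : G, ⋃ k ≤ n, g • (f^[k] ⁻¹' U) ↔ ∃ g : G, ∃ k ≤ n, f^[k] (g • x) ∈ U := by
  simp only [mem_iUnion, mem_smul_set_iff_inv_smul_mem, mem_preimage, exists_prop]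
  exact ⟨fun ⟨g, hg⟩ => ⟨g⁻¹, hg⟩, fun ⟨g, hg⟩ => ⟨g⁻¹, by rwa [inv_inv]⟩⟩

end

theorem gMinimal_iff_finite_cover_general {G X : Type*} [Group G] [TopologicalSpace G]
    [TopologicalSpace X] [SeqCompactSpace X]
    [MulAction G X] [ContinuousSMul G X]
    (f : X → X) (hf : Continuous f) (hpe : Pseudoequivariant (G := G) f) :
    GMinimal (G := G) f ↔
      ∀ U : Set X, IsOpen U → U.Nonempty →
        ∃ n : ℕ, (⋃ g : G, ⋃ k ≤ n, g • (f^[k] ⁻¹' U)) = Set.univ := by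
  constructor
  · intro hmin U hU hUne
    set V : ℕ → Set X := fun n => ⋃ g : G, ⋃ k ≤ n, g • (f^[k] ⁻¹' U)
    have hopen (n : ℕ) : IsOpen (V n) :=
      isOpen_iUnion fun g => isOpen_biUnion fun k _ => (hU.preimage (hf.iterate k)).smul g
    have hmono : Monotone V := fun _ _ hmn =>
      iUnion_mono fun _ => biUnion_mono (fun _ hk => le_trans hk hmn) fun _ _ => subset_rfl
    have hcover : univ ⊆ ⋃ n, V n := fun x _ => by
      obtain ⟨g, k, hk⟩ := (hpe.inter_gfOrbit_nonempty_iff U x).mp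
        (dense_iff_inter_open.mp (dense_iff_closure_eq.mpr (hmin x)) U hU hUne)
      exact mem_iUnion.mpr
        ⟨k, (mem_iUnion_smul_preimage_iterate_iff U k x).mpr ⟨g, k, le_rfl, hk⟩⟩
    obtain ⟨n, hn⟩ := isSeqCompact_univ.isCountablyCompact.elim_directed_cover V hopen hcover
      hmono.directed_le
    exact ⟨n, univ_subset_iff.mp hn⟩
  · intro hfin x
    refine (dense_iff_inter_open.mpr fun U hU hUne => ?_).closure_eq
    obtain ⟨n, hn⟩ := hfin U hU hUne
    obtain ⟨g, k, -, hk⟩ := (mem_iUnion_smul_preimage_iterate_iff U n x).mp (hn ▸ mem_univ x)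
    exact (hpe.inter_gfOrbit_nonempty_iff U x).mpr ⟨g, k, hk⟩

/-- Let `X` be a sequentially compact `G`-space and `f : X → X` be pseudoequivariant.
Then `f` is `G`-minimal iff for every nonempty open set `U ⊆ X` there is `n ∈ ℕ` with
`⋃_{g ∈ G} ⋃_{k = 0}^{n} g • f^{-k}(U) = X`. -/
theorem gMinimal_iff_finite_cover {G X : Type*} [Group G] [TopologicalSpace G]
    [IsTopologicalGroup G] [TopologicalSpace X] [SeqCompactSpace X]
    [MulAction G X] [ContinuousSMul G X]
    (f : X → X) (hf : Continuous f) (hpe : Pseudoequivariant (G := G) f) :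
    GMinimal (G := G) f ↔
      ∀ U : Set X, IsOpen U → U.Nonempty →
        ∃ n : ℕ, (⋃ g : G, ⋃ k ≤ n, g • (f^[k] ⁻¹' U)) = Set.univ :=
  gMinimal_iff_finite_cover_general f hf hpe
end

section
/- Let X be a nonempty compact Hausdorff G-space and f : X → X be pseudoequivariant. Then X contains a nonempty subset A that is closed, G-invariant (g • A ⊆ A for all g ∈ G), f-invariant (f(A) = A), and G-minimal, i.e. for every y ∈ A the closure of G_f(y) equals A. -/
open Pointwise

open Set

/-! Zorn's lemma together with compactness (for the finite intersection property) yields a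
closed nonempty set `M` that is minimal among closed nonempty sets invariant under both `f`
and `G`. Pseudoequivariance makes `f '' M` and the closure of each `G_f`-orbit in `M` again
such sets, so by minimality both equal `M`. -/

theorem exists_minimal_nonempty_isClosed {X : Type*} [TopologicalSpace X] [CompactSpace X]
    [Nonempty X] {P : Set X → Prop} (hP_univ : P univ)
    (hP_sInter : ∀ c : Set (Set X), c.Nonempty → (∀ A ∈ c, P A) → P (⋂₀ c)) :
    ∃ M, Minimal (fun A : Set X => A.Nonempty ∧ IsClosed A ∧ P A) M := by
  have h_lb : ∀ c ⊆ {A : Set X | A.Nonempty ∧ IsClosed A ∧ P A}, IsChain (· ⊆ ·) c →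
      c.Nonempty → ∃ lb ∈ {A : Set X | A.Nonempty ∧ IsClosed A ∧ P A}, ∀ A ∈ c, lb ⊆ A := by
    intro c hc hchain hc_ne
    have : Nonempty c := hc_ne.to_subtype
    refine ⟨⋂₀ c, ⟨?_, isClosed_sInter fun A hA => (hc hA).2.1,
      hP_sInter c hc_ne fun A hA => (hc hA).2.2⟩, fun _ => sInter_subset_of_mem⟩
    exact IsCompact.nonempty_sInter_of_directed_nonempty_isCompact_isClosed
      (fun A hA B hB => (hchain.total hA hB).elim (fun h => ⟨A, hA, subset_rfl, h⟩)
        fun h => ⟨B, hB, h, subset_rfl⟩)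
      (fun A hA => (hc hA).1) (fun A hA => (hc hA).2.1.isCompact) (fun A hA => (hc hA).2.1)
  obtain ⟨M, -, hM⟩ := zorn_superset_nonempty _ h_lb univ ⟨univ_nonempty, isClosed_univ, hP_univ⟩
  exact ⟨M, hM⟩

section

variable {G X : Type*} [Group G] [MulAction G X] {f : X → X}

theorem Pseudoequivariant.exists_apply_smul (hpe : Pseudoequivariant (G := G) f) (g : G) (x : X) :
    ∃ h : G, f (g • x) = h • f x := by
  obtain ⟨h, hh⟩ : f (g • x) ∈ MulAction.orbit G (f x) :=
    hpe x ▸ mem_image_of_mem f (MulAction.mem_orbit x g)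
  exact ⟨h, hh.symm⟩

theorem Pseudoequivariant.exists_smul_apply (hpe : Pseudoequivariant (G := G) f) (g : G) (x : X) :
    ∃ h : G, g • f x = f (h • x) := by
  obtain ⟨_, ⟨h, rfl⟩, hh⟩ : g • f x ∈ f '' MulAction.orbit G x :=
    (hpe x).symm ▸ MulAction.mem_orbit (f x) g
  exact ⟨h, hh.symm⟩

theorem self_mem_gfOrbit (x : X) : x ∈ GfOrbit (G := G) f x :=
  ⟨1, 0, one_smul G x⟩

variable (G f) in
structure IsGfInvariant (A : Set X) : Prop where
  image_subset : f '' A ⊆ A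
  smul_subset : ∀ g : G, g • A ⊆ A

namespace IsGfInvariant

variable (G f) in
theorem univ : IsGfInvariant G f (univ : Set X) :=
  ⟨subset_univ _, fun _ => subset_univ _⟩

theorem sInter {c : Set (Set X)} (hc : ∀ A ∈ c, IsGfInvariant G f A) :
    IsGfInvariant G f (⋂₀ c) where
  image_subset := by
    rintro _ ⟨x, hx, rfl⟩ A hA
    exact (hc A hA).image_subset (mem_image_of_mem f (hx A hA))
  smul_subset g := by
    rintro _ ⟨x, hx, rfl⟩ A hA
    exact (hc A hA).smul_subset g (smul_mem_smul_set (hx A hA))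

theorem iterate_mem {A : Set X} (hA : IsGfInvariant G f A) {x : X} (hx : x ∈ A) (k : ℕ) :
    f^[k] x ∈ A :=
  (mapsTo_iff_image_subset.mpr hA.image_subset).iterate k hx

theorem gfOrbit_subset {A : Set X} (hA : IsGfInvariant G f A) {x : X} (hx : x ∈ A) :
    GfOrbit (G := G) f x ⊆ A := by
  rintro _ ⟨g, k, rfl⟩
  exact hA.smul_subset g (smul_mem_smul_set (hA.iterate_mem hx k))

theorem closure [TopologicalSpace X] [ContinuousConstSMul G X] (hf : Continuous f) {A : Set X}
    (hA : IsGfInvariant G f A) : IsGfInvariant G f (closure A) where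
  image_subset := (image_closure_subset_closure_image hf).trans (closure_mono hA.image_subset)
  smul_subset g := (closure_smul g A).symm.subset.trans (closure_mono (hA.smul_subset g))

theorem image (hpe : Pseudoequivariant (G := G) f) {A : Set X} (hA : IsGfInvariant G f A) :
    IsGfInvariant G f (f '' A) where
  image_subset := image_mono hA.image_subset
  smul_subset g := by
    rintro _ ⟨_, ⟨x, hx, rfl⟩, rfl⟩
    obtain ⟨h, hh⟩ := hpe.exists_smul_apply g x
    show g • f x ∈ f '' A
    exact hh ▸ mem_image_of_mem f (hA.smul_subset h (smul_mem_smul_set hx))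

end IsGfInvariant

theorem Pseudoequivariant.isGfInvariant_gfOrbit (hpe : Pseudoequivariant (G := G) f) (x : X) :
    IsGfInvariant G f (GfOrbit (G := G) f x) where
  image_subset := by
    rintro _ ⟨_, ⟨g, k, rfl⟩, rfl⟩
    obtain ⟨h, hh⟩ := hpe.exists_apply_smul g (f^[k] x)
    exact ⟨h, k + 1, by rw [Function.iterate_succ_apply', hh]⟩
  smul_subset g := by
    rintro _ ⟨_, ⟨h, k, rfl⟩, rfl⟩
    exact ⟨g * h, k, mul_smul g h _⟩

end

theorem exists_gMinimal_set_general {G X : Type*} [Group G] [TopologicalSpace G]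
    [TopologicalSpace X] [CompactSpace X] [T2Space X] [Nonempty X]
    [MulAction G X] [ContinuousSMul G X]
    (f : X → X) (hf : Continuous f) (hpe : Pseudoequivariant (G := G) f) :
    ∃ A : Set X, A.Nonempty ∧ IsClosed A ∧ (∀ g : G, g • A ⊆ A) ∧ f '' A = A ∧
      ∀ y ∈ A, closure (GfOrbit (G := G) f y) = A := by
  obtain ⟨M, hM⟩ := exists_minimal_nonempty_isClosed (IsGfInvariant.univ G f)
    fun _ _ hc => IsGfInvariant.sInter hc
  obtain ⟨hM_ne, hM_closed, hM_inv⟩ := hM.prop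
  refine ⟨M, hM_ne, hM_closed, hM_inv.smul_subset, ?_, fun y hy => ?_⟩
  · exact hM.eq_of_subset ⟨hM_ne.image f, (hM_closed.isCompact.image hf).isClosed,
      hM_inv.image hpe⟩ hM_inv.image_subset
  · exact hM.eq_of_subset ⟨⟨y, subset_closure (self_mem_gfOrbit y)⟩, isClosed_closure,
      (hpe.isGfInvariant_gfOrbit y).closure hf⟩
      (closure_minimal (hM_inv.gfOrbit_subset hy) hM_closed)

/-- Let `X` be a nonempty compact Hausdorff `G`-space and `f : X → X` be
pseudoequivariant. Then `X` contains a nonempty subset `A` that is closed,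
`G`-invariant, `f`-invariant (`f(A) = A`), and `G`-minimal (the closure of `G_f(y)`
equals `A` for every `y ∈ A`). -/
theorem exists_gMinimal_set {G X : Type*} [Group G] [TopologicalSpace G]
    [IsTopologicalGroup G] [TopologicalSpace X] [CompactSpace X] [T2Space X] [Nonempty X]
    [MulAction G X] [ContinuousSMul G X]
    (f : X → X) (hf : Continuous f) (hpe : Pseudoequivariant (G := G) f) :
    ∃ A : Set X, A.Nonempty ∧ IsClosed A ∧ (∀ g : G, g • A ⊆ A) ∧ f '' A = A ∧
      ∀ y ∈ A, closure (GfOrbit (G := G) f y) = A :=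
  exists_gMinimal_set_general f hf hpe
end
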